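/- The double sum over n, k ≥ 0 of (-1)^n q^(k(k+1) + n(n+1)/2) (q;q)_n/((q;q)_k (q;q)_{n-k}) equals the sum over n ≥ 0 of q^(3n²+2n)(1 - q^(2n+1)), as formal power series in q (terms with n - k < 0 are 0). -/

import Mathlib

open scoped BigOperators

/-- `(q;q)_n = ∏_{k=1}^n (1 - q^k)` -/
noncomputable def qp (q : ℂ) (n : ℕ) : ℂ := ∏ k ∈ Finset.range n, (1 - q ^ (k + 1))

/-- `(q;q)_∞ = ∏_{k≥1} (1 - q^k)` -/
noncomputable def qpInf (q : ℂ) : ℂ := ∏' k : ℕ, (1 - q ^ (k + 1))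

/-- `(a;q)_n = ∏_{k=1}^n (1 - a q^{k-1})` -/
noncomputable def qpa (a q : ℂ) (n : ℕ) : ℂ := ∏ k ∈ Finset.range n, (1 - a * q ^ k)

/-- `(a;q)_∞ = ∏_{k≥0} (1 - a q^k)` -/
noncomputable def qpaInf (a q : ℂ) : ℂ := ∏' k : ℕ, (1 - a * q ^ k)


/-!
Write the inner sum as `(-1)^n q^(n(n+1)/2) a_n(1)` with `a_n(b) = ∑_k q^(k(k+b)) [n, k]_q`.
The two q-Pascal rules give `a_{n+1}(b) = a_n(b) + q^(n+1+b) a_n(b+1)` and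
`a_{n+1}(b) = a_n(b+1) + q^(b+1) a_n(b+2)`; iterating them splits `a_n(1)` into the single power
`q^(m(m+1))`, `m = ⌊n/2⌋`, plus tails `S_n + q^(n+1) S_{n+1}`, where
`S_n = ∑_{j < ⌊n/2⌋} q^(j(j+1)) a_{n-2-2j}(2j+2)`. After multiplication by
`(-1)^n q^(n(n+1)/2)` the tails telescope, and since the `[n, k]_q` are uniformly bounded for
`‖q‖ < 1` the remainder tends to zero. What survives is `∑ (-1)^n q^(n(n+1)/2 + m(m+1))`, which
becomes the right-hand side after grouping the terms `n = 2m, 2m + 1`.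
-/

open Finset

section Combinatorics

variable {q : ℂ}

theorem qp_zero (q : ℂ) : qp q 0 = 1 :=
  prod_range_zero _

theorem qp_succ (q : ℂ) (n : ℕ) : qp q (n + 1) = qp q n * (1 - q ^ (n + 1)) :=
  prod_range_succ _ n

theorem one_sub_pow_succ_ne_zero (hq : ∀ n, q ^ (n + 1) ≠ 1) (n : ℕ) : 1 - q ^ (n + 1) ≠ 0 :=
  sub_ne_zero.2 (hq n).symm

theorem qp_ne_zero (hq : ∀ n, q ^ (n + 1) ≠ 1) (n : ℕ) : qp q n ≠ 0 :=
  prod_ne_zero_iff.2 fun k _ => one_sub_pow_succ_ne_zero hq k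

noncomputable def qbinom (q : ℂ) (n k : ℕ) : ℂ :=
  if k ≤ n then qp q n / (qp q k * qp q (n - k)) else 0

theorem qbinom_of_lt (q : ℂ) {n k : ℕ} (h : n < k) : qbinom q n k = 0 :=
  if_neg (not_le.2 h)

theorem qbinom_zero_right (hq : ∀ n, q ^ (n + 1) ≠ 1) (n : ℕ) : qbinom q n 0 = 1 := by
  simp [qbinom, qp_zero, qp_ne_zero hq n]

theorem qbinom_self (hq : ∀ n, q ^ (n + 1) ≠ 1) (n : ℕ) : qbinom q n n = 1 := by
  simp [qbinom, qp_zero, qp_ne_zero hq n]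

theorem qbinom_succ_succ_of_lt (hq : ∀ n, q ^ (n + 1) ≠ 1) {n k : ℕ} (h : k < n) :
    qbinom q (n + 1) (k + 1) = qbinom q n (k + 1) + q ^ (n - k) * qbinom q n k ∧
      qbinom q (n + 1) (k + 1) = qbinom q n k + q ^ (k + 1) * qbinom q n (k + 1) := by
  obtain ⟨i, rfl⟩ := Nat.exists_eq_add_of_lt h
  have := qp_ne_zero hq k
  have := qp_ne_zero hq i
  have := qp_ne_zero hq (k + i)
  have := one_sub_pow_succ_ne_zero hq k
  have := one_sub_pow_succ_ne_zero hq i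
  simp only [qbinom, if_pos (by omega : k + 1 ≤ k + i + 1 + 1),
    if_pos (by omega : k + 1 ≤ k + i + 1), if_pos (by omega : k ≤ k + i + 1),
    show k + i + 1 + 1 - (k + 1) = i + 1 by omega,
    show k + i + 1 - (k + 1) = i by omega, show k + i + 1 - k = i + 1 by omega, qp_succ]
  constructor <;> (field_simp; ring)

theorem qbinom_succ_succ (hq : ∀ n, q ^ (n + 1) ≠ 1) (n k : ℕ) :
    qbinom q (n + 1) (k + 1) = qbinom q n (k + 1) + q ^ (n - k) * qbinom q n k := by
  rcases lt_trichotomy k n with h | rfl | h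
  · exact (qbinom_succ_succ_of_lt hq h).1
  · simp [qbinom_self hq, qbinom_of_lt q k.lt_succ_self]
  · simp [qbinom_of_lt q h, qbinom_of_lt q (Nat.lt_succ_of_lt h),
      qbinom_of_lt q (Nat.succ_lt_succ h)]

theorem qbinom_succ_succ' (hq : ∀ n, q ^ (n + 1) ≠ 1) (n k : ℕ) :
    qbinom q (n + 1) (k + 1) = qbinom q n k + q ^ (k + 1) * qbinom q n (k + 1) := by
  rcases lt_trichotomy k n with h | rfl | h
  · exact (qbinom_succ_succ_of_lt hq h).2
  · simp [qbinom_self hq, qbinom_of_lt q k.lt_succ_self]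
  · simp [qbinom_of_lt q h, qbinom_of_lt q (Nat.lt_succ_of_lt h),
      qbinom_of_lt q (Nat.succ_lt_succ h)]

noncomputable def qbinomSum (q : ℂ) (n b : ℕ) : ℂ :=
  ∑ k ∈ range (n + 1), q ^ (k * (k + b)) * qbinom q n k

theorem qbinomSum_zero (hq : ∀ n, q ^ (n + 1) ≠ 1) (b : ℕ) : qbinomSum q 0 b = 1 := by
  simp [qbinomSum, qbinom_zero_right hq]

theorem qbinomSum_one (hq : ∀ n, q ^ (n + 1) ≠ 1) (b : ℕ) : qbinomSum q 1 b = 1 + q ^ (b + 1) := by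
  simp [qbinomSum, sum_range_succ, qbinom_zero_right hq, qbinom_self hq, add_comm b]

theorem qbinomSum_eq_sum_range_add_two (q : ℂ) (n b : ℕ) :
    qbinomSum q n b = ∑ k ∈ range (n + 2), q ^ (k * (k + b)) * qbinom q n k := by
  rw [qbinomSum, sum_range_succ _ (n + 1), qbinom_of_lt q n.lt_succ_self, mul_zero, add_zero]

theorem qbinomSum_succ (hq : ∀ n, q ^ (n + 1) ≠ 1) (n b : ℕ) :
    qbinomSum q (n + 1) b = qbinomSum q n b + q ^ (n + 1 + b) * qbinomSum q n (b + 1) := by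
  have hterm : ∀ k ∈ range (n + 1),
      q ^ ((k + 1) * (k + 1 + b)) * qbinom q (n + 1) (k + 1) =
        q ^ ((k + 1) * (k + 1 + b)) * qbinom q n (k + 1) +
          q ^ (n + 1 + b) * (q ^ (k * (k + (b + 1))) * qbinom q n k) := by
    intro k hk
    obtain ⟨m, rfl⟩ := Nat.exists_eq_add_of_le (Nat.lt_succ_iff.1 (mem_range.1 hk))
    rw [qbinom_succ_succ hq, Nat.add_sub_cancel_left]
    ring
  rw [qbinomSum, sum_range_succ', sum_congr rfl hterm, sum_add_distrib, ← mul_sum,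
    qbinomSum_eq_sum_range_add_two q n b, sum_range_succ' _ (n + 1)]
  unfold qbinomSum
  simp only [qbinom_zero_right hq]
  ring

theorem qbinomSum_succ' (hq : ∀ n, q ^ (n + 1) ≠ 1) (n b : ℕ) :
    qbinomSum q (n + 1) b = qbinomSum q n (b + 1) + q ^ (b + 1) * qbinomSum q n (b + 2) := by
  have hterm : ∀ k ∈ range (n + 1),
      q ^ ((k + 1) * (k + 1 + b)) * qbinom q (n + 1) (k + 1) =
        q ^ (b + 1) * (q ^ (k * (k + (b + 2))) * qbinom q n k) +
          q ^ ((k + 1) * (k + 1 + (b + 1))) * qbinom q n (k + 1) := by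
    intro k _
    rw [qbinom_succ_succ' hq]
    ring
  rw [qbinomSum, sum_range_succ', sum_congr rfl hterm, sum_add_distrib, ← mul_sum,
    qbinomSum_eq_sum_range_add_two q n (b + 1), sum_range_succ' _ (n + 1)]
  unfold qbinomSum
  simp only [qbinom_zero_right hq]
  ring

end Combinatorics

section Telescoping

variable {q : ℂ}

noncomputable def tailSum (q : ℂ) (n t : ℕ) : ℂ :=
  ∑ j ∈ Ico t (n / 2), q ^ (j * (j + 1)) * qbinomSum q (n - 2 - 2 * j) (2 * j + 2)

theorem tailSum_of_le (q : ℂ) {n t : ℕ} (h : n / 2 ≤ t) : tailSum q n t = 0 := by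
  rw [tailSum, Ico_eq_empty_of_le h, sum_empty]

theorem tailSum_of_lt (q : ℂ) {n t : ℕ} (h : t < n / 2) :
    tailSum q n t =
      q ^ (t * (t + 1)) * qbinomSum q (n - 2 - 2 * t) (2 * t + 2) + tailSum q n (t + 1) := by
  rw [tailSum, tailSum, sum_eq_sum_Ico_succ_bot h]

theorem pow_mul_qbinomSum_eq_tailSum (hq : ∀ n, q ^ (n + 1) ≠ 1) (d t : ℕ) :
    q ^ (t * (t + 1)) * qbinomSum q d (2 * t + 1) =
      tailSum q (2 * t + d) t + q ^ (2 * t + d + 1) * tailSum q (2 * t + d + 1) t +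
        q ^ ((2 * t + d) / 2 * ((2 * t + d) / 2 + 1)) := by
  induction d using Nat.twoStepInduction generalizing t with
  | zero =>
    rw [qbinomSum_zero hq, tailSum_of_le q (by omega), tailSum_of_le q (by omega),
      show (2 * t + 0) / 2 = t by omega]
    ring
  | one =>
    rw [qbinomSum_one hq, tailSum_of_le q (by omega), tailSum_of_lt q (by omega),
      tailSum_of_le q (by omega), show 2 * t + 1 + 1 - 2 - 2 * t = 0 by omega, qbinomSum_zero hq,
      show (2 * t + 1) / 2 = t by omega]
    ring
  | more e ih _ =>
    have ih := ih (t + 1)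
    rw [show 2 * (t + 1) + e = 2 * t + (e + 2) by ring] at ih
    rw [qbinomSum_succ hq, qbinomSum_succ' hq, tailSum_of_lt q (t := t) (by omega),
      tailSum_of_lt q (t := t) (by omega), show 2 * t + (e + 2) - 2 - 2 * t = e by omega,
      show 2 * t + (e + 2) + 1 - 2 - 2 * t = e + 1 by omega]
    linear_combination ih

noncomputable def lhsTerm (q : ℂ) (n : ℕ) : ℂ :=
  (-1) ^ n * q ^ (n * (n + 1) / 2) * qbinomSum q n 1

noncomputable def rhsTerm (q : ℂ) (n : ℕ) : ℂ :=
  (-1) ^ n * q ^ (n * (n + 1) / 2 + n / 2 * (n / 2 + 1))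

noncomputable def remainderTerm (q : ℂ) (n : ℕ) : ℂ :=
  (-1) ^ n * q ^ (n * (n + 1) / 2) * tailSum q n 0

theorem triangle_succ (n : ℕ) : (n + 1) * (n + 1 + 1) / 2 = n * (n + 1) / 2 + (n + 1) := by
  rw [show (n + 1) * (n + 1 + 1) = n * (n + 1) + (n + 1) * 2 by ring,
    Nat.add_mul_div_right _ _ two_pos]

theorem lhsTerm_sub_rhsTerm (hq : ∀ n, q ^ (n + 1) ≠ 1) (n : ℕ) :
    lhsTerm q n - rhsTerm q n = remainderTerm q n - remainderTerm q (n + 1) := by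
  have key : qbinomSum q n 1 =
      tailSum q n 0 + q ^ (n + 1) * tailSum q (n + 1) 0 + q ^ (n / 2 * (n / 2 + 1)) := by
    simpa using pow_mul_qbinomSum_eq_tailSum hq n 0
  rw [lhsTerm, rhsTerm, remainderTerm, remainderTerm, key, triangle_succ, pow_succ (-1 : ℂ),
    pow_add, pow_add]
  ring

theorem remainderTerm_zero (q : ℂ) : remainderTerm q 0 = 0 := by
  simp [remainderTerm, tailSum]

end Telescoping

open Filter Topology

theorem tsum_eq_tsum_of_sub_eq_sub_succ {α : Type*} [AddCommGroup α] [TopologicalSpace α]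
    [IsTopologicalAddGroup α] [T2Space α] {f g G : ℕ → α} (hf : Summable f) (hg : Summable g)
    (hG : Tendsto G atTop (𝓝 0)) (hG0 : G 0 = 0) (h : ∀ n, f n - g n = G n - G (n + 1)) :
    ∑' n, f n = ∑' n, g n := by
  have hpartial : Tendsto (fun N => ∑ n ∈ range N, (f n - g n)) atTop (𝓝 0) := by
    simp_rw [h, sum_range_sub', hG0, zero_sub]
    simpa using hG.neg
  rw [← sub_eq_zero, ← hf.tsum_sub hg]
  exact tendsto_nhds_unique (hf.sub hg).hasSum.tendsto_sum_nat hpartial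

theorem summable_succ_pow_mul_geometric {r : ℝ} (hr0 : 0 ≤ r) (hr1 : r < 1) (k : ℕ) :
    Summable fun n : ℕ => ((n : ℝ) + 1) ^ k * r ^ n := by
  have hr : ‖r‖ < 1 := by rwa [Real.norm_of_nonneg hr0]
  simp_rw [add_pow, one_pow, mul_one, sum_mul]
  exact summable_sum fun i _ => by
    simpa [mul_assoc, mul_comm, mul_left_comm] using
      (summable_pow_mul_geometric_of_norm_lt_one i hr).mul_left (k.choose i : ℝ)

theorem le_triangle (n : ℕ) : n ≤ n * (n + 1) / 2 := by
  rcases n with _ | n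
  · simp
  · exact (Nat.le_div_iff_mul_le two_pos).2 (by nlinarith)

theorem norm_pow_le_one {R : Type*} [SeminormedRing R] [NormOneClass R] {x : R} (hx : ‖x‖ ≤ 1)
    (e : ℕ) : ‖x ^ e‖ ≤ 1 :=
  (norm_pow_le x e).trans (pow_le_one₀ (norm_nonneg x) hx)

section Bounds

variable {q : ℂ}

theorem pow_succ_ne_one_of_norm_lt_one (hq : ‖q‖ < 1) (n : ℕ) : q ^ (n + 1) ≠ 1 := by
  intro h
  have := pow_lt_one₀ (norm_nonneg q) hq n.succ_ne_zero
  rw [← norm_pow, h, norm_one] at this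
  exact lt_irrefl _ this

theorem exists_forall_norm_qp_le (hq : ‖q‖ < 1) :
    ∃ C, ∀ n, ‖qp q n‖ ≤ C ∧ ‖(qp q n)⁻¹‖ ≤ C := by
  set r := ‖q‖
  have hr0 : 0 ≤ r := norm_nonneg q
  have hr1 : 0 < 1 - r := sub_pos.2 hq
  set f : ℕ → ℝ := fun k => r ^ (k + 1) / (1 - r)
  have hf0 : ∀ k, 0 ≤ f k := fun k => by positivity
  have hf : Summable f := by
    simpa [f, pow_succ] using
      ((summable_geometric_of_lt_one hr0 hq).mul_right r).div_const (1 - r)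
  have hprod : ∀ n, ∏ k ∈ range n, (1 + f k) ≤ Real.exp (∑' k, f k) := fun n =>
    (Real.prod_one_add_le_exp_sum _ hf0).trans
      (Real.exp_le_exp.2 (hf.sum_le_tsum _ fun k _ => hf0 k))
  have hfactor : ∀ k, ‖1 - q ^ (k + 1)‖ ≤ 1 + f k ∧ ‖(1 - q ^ (k + 1))⁻¹‖ ≤ 1 + f k := by
    intro k
    have hy : r ^ (k + 1) ≤ r := pow_le_of_le_one hr0 hq.le k.succ_ne_zero
    have hy0 : 0 ≤ r ^ (k + 1) := pow_nonneg hr0 _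
    have hlow : 1 - r ^ (k + 1) ≤ ‖1 - q ^ (k + 1)‖ := by
      simpa [r] using norm_sub_norm_le (1 : ℂ) (q ^ (k + 1))
    constructor
    · calc ‖1 - q ^ (k + 1)‖ ≤ 1 + r ^ (k + 1) := by
            simpa [r] using norm_sub_le (1 : ℂ) (q ^ (k + 1))
        _ ≤ 1 + f k := by gcongr; exact le_div_self hy0 hr1 (by linarith)
    · rw [norm_inv]
      calc ‖1 - q ^ (k + 1)‖⁻¹ ≤ (1 - r ^ (k + 1))⁻¹ := inv_anti₀ (by linarith) hlow
        _ ≤ 1 + f k := by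
          rw [inv_le_iff_one_le_mul₀ (by linarith)]
          have : r ^ (k + 1) ≤ (1 - r ^ (k + 1)) * f k := by
            rw [mul_div_left_comm]
            exact le_mul_of_one_le_right hy0 ((one_le_div hr1).2 (by linarith))
          linarith
  refine ⟨Real.exp (∑' k, f k), fun n => ⟨?_, ?_⟩⟩
  · rw [qp, norm_prod]
    exact (prod_le_prod (fun _ _ => norm_nonneg _) fun k _ => (hfactor k).1).trans (hprod n)
  · rw [qp, ← prod_inv_distrib, norm_prod]
    exact (prod_le_prod (fun _ _ => norm_nonneg _) fun k _ => (hfactor k).2).trans (hprod n)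

theorem exists_forall_norm_qbinom_le (hq : ‖q‖ < 1) : ∃ C, ∀ n k, ‖qbinom q n k‖ ≤ C := by
  obtain ⟨C, hC⟩ := exists_forall_norm_qp_le hq
  have hC0 : 0 ≤ C := (norm_nonneg _).trans (hC 0).1
  refine ⟨C ^ 3, fun n k => ?_⟩
  by_cases hk : k ≤ n
  · rw [qbinom, if_pos hk, div_eq_mul_inv, mul_inv, norm_mul, norm_mul, pow_three]
    gcongr
    exacts [(hC n).1, (hC k).2, (hC (n - k)).2]
  · rw [qbinom_of_lt q (not_le.1 hk), norm_zero]
    positivity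

variable {C : ℝ}

theorem norm_qbinomSum_le (hq : ‖q‖ < 1) (hC : ∀ n k, ‖qbinom q n k‖ ≤ C) (n b : ℕ) :
    ‖qbinomSum q n b‖ ≤ (n + 1) * C := by
  calc ‖qbinomSum q n b‖ ≤ ∑ k ∈ range (n + 1), ‖q ^ (k * (k + b)) * qbinom q n k‖ :=
        norm_sum_le _ _
    _ ≤ ∑ k ∈ range (n + 1), C := by
        gcongr with k
        rw [norm_mul]
        exact (mul_le_of_le_one_left (norm_nonneg _) (norm_pow_le_one hq.le _)).trans (hC n k)
    _ = (n + 1) * C := by simp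

theorem norm_tailSum_le (hq : ‖q‖ < 1) (hC : ∀ n k, ‖qbinom q n k‖ ≤ C) (n t : ℕ) :
    ‖tailSum q n t‖ ≤ (n + 1) ^ 2 * C := by
  have hC0 : 0 ≤ C := (norm_nonneg _).trans (hC 0 0)
  calc ‖tailSum q n t‖
      ≤ ∑ j ∈ Ico t (n / 2), ‖q ^ (j * (j + 1)) * qbinomSum q (n - 2 - 2 * j) (2 * j + 2)‖ :=
        norm_sum_le _ _
    _ ≤ ∑ j ∈ Ico t (n / 2), (n + 1) * C := by
        gcongr with j
        rw [norm_mul]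
        refine (mul_le_of_le_one_left (norm_nonneg _) (norm_pow_le_one hq.le _)).trans
          ((norm_qbinomSum_le hq hC _ _).trans ?_)
        gcongr
        exact_mod_cast Nat.sub_le _ _ |>.trans (Nat.sub_le _ _)
    _ ≤ (n + 1) ^ 2 * C := by
        rw [sum_const, nsmul_eq_mul, Nat.card_Ico, sq, mul_assoc]
        gcongr
        exact_mod_cast (by omega : n / 2 - t ≤ n + 1)

end Bounds

section Series

variable {q : ℂ}

theorem norm_pow_triangle_le (hq : ‖q‖ < 1) (n : ℕ) : ‖q ^ (n * (n + 1) / 2)‖ ≤ ‖q‖ ^ n := by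
  rw [norm_pow]
  exact pow_le_pow_of_le_one (norm_nonneg q) hq.le (le_triangle n)

theorem summable_lhsTerm (hq : ‖q‖ < 1) : Summable (lhsTerm q) := by
  obtain ⟨C, hC⟩ := exists_forall_norm_qbinom_le hq
  refine .of_norm_bounded ((summable_succ_pow_mul_geometric (norm_nonneg q) hq 1).mul_right C)
    fun n => ?_
  rw [lhsTerm, norm_mul, norm_mul, norm_pow, norm_neg, norm_one, one_pow, one_mul, pow_one,
    mul_right_comm, mul_comm _ (‖q‖ ^ n)]
  exact mul_le_mul (norm_pow_triangle_le hq n) (norm_qbinomSum_le hq hC n 1) (norm_nonneg _)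
    (by positivity)

theorem tendsto_remainderTerm (hq : ‖q‖ < 1) : Tendsto (remainderTerm q) atTop (𝓝 0) := by
  obtain ⟨C, hC⟩ := exists_forall_norm_qbinom_le hq
  refine squeeze_zero_norm (fun n => ?_)
    ((summable_succ_pow_mul_geometric (norm_nonneg q) hq 2).mul_right C).tendsto_atTop_zero
  rw [remainderTerm, norm_mul, norm_mul, norm_pow, norm_neg, norm_one, one_pow, one_mul,
    mul_right_comm, mul_comm _ (‖q‖ ^ n)]
  exact mul_le_mul (norm_pow_triangle_le hq n) (norm_tailSum_le hq hC n 0) (norm_nonneg _)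
    (by positivity)

theorem summable_rhsTerm (hq : ‖q‖ < 1) : Summable (rhsTerm q) := by
  refine .of_norm_bounded (summable_geometric_of_lt_one (norm_nonneg q) hq) fun n => ?_
  rw [rhsTerm, norm_mul, norm_pow, norm_neg, norm_one, one_pow, one_mul, pow_add, norm_mul]
  exact (mul_le_of_le_one_right (norm_nonneg _) (norm_pow_le_one hq.le _)).trans
    (norm_pow_triangle_le hq n)

theorem rhsTerm_two_mul (q : ℂ) (m : ℕ) : rhsTerm q (2 * m) = q ^ (3 * m ^ 2 + 2 * m) := by
  rw [rhsTerm, pow_mul, neg_one_sq, one_pow, one_mul,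
    show 2 * m * (2 * m + 1) = 2 * (m * (2 * m + 1)) by ring, Nat.mul_div_cancel_left _ two_pos,
    Nat.mul_div_cancel_left _ two_pos]
  ring_nf

theorem rhsTerm_two_mul_add_one (q : ℂ) (m : ℕ) :
    rhsTerm q (2 * m + 1) = -q ^ (3 * m ^ 2 + 2 * m + (2 * m + 1)) := by
  rw [rhsTerm, pow_succ, pow_mul, neg_one_sq, one_pow, one_mul, neg_one_mul,
    show (2 * m + 1) * (2 * m + 1 + 1) = 2 * ((2 * m + 1) * (m + 1)) by ring,
    Nat.mul_div_cancel_left _ two_pos, show (2 * m + 1) / 2 = m by omega]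
  ring_nf

theorem tsum_rhsTerm (hq : ‖q‖ < 1) :
    ∑' n, rhsTerm q n = ∑' n : ℕ, q ^ (3 * n ^ 2 + 2 * n) * (1 - q ^ (2 * n + 1)) := by
  have heven : Summable fun m => rhsTerm q (2 * m) :=
    (summable_rhsTerm hq).comp_injective (mul_right_injective₀ two_ne_zero)
  have hodd : Summable fun m => rhsTerm q (2 * m + 1) := (summable_rhsTerm hq).comp_injective
    ((add_left_injective 1).comp (mul_right_injective₀ (two_ne_zero' ℕ)))
  rw [← tsum_even_add_odd heven hodd, ← Summable.tsum_add heven hodd]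
  refine tsum_congr fun m => ?_
  simp only [rhsTerm_two_mul, rhsTerm_two_mul_add_one, pow_add q _ (2 * m + 1)]
  ring

end Series

theorem tsum_qbinom_eq_lhsTerm (q : ℂ) (n : ℕ) :
    ∑' k : ℕ, (if k ≤ n then
        (-1 : ℂ) ^ n * q ^ (k * (k + 1) + n * (n + 1) / 2) * qp q n / (qp q k * qp q (n - k))
      else 0) = lhsTerm q n := by
  rw [tsum_eq_sum (s := range (n + 1)) fun k hk => if_neg (by simpa [Nat.lt_succ_iff] using hk),
    lhsTerm, qbinomSum, mul_sum]
  refine sum_congr rfl fun k hk => ?_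
  have hkn : k ≤ n := Nat.lt_succ_iff.1 (mem_range.1 hk)
  rw [qbinom, if_pos hkn, if_pos hkn, pow_add]
  ring

/-- A Bailey-pair identity. -/
theorem bailey_b3 (q : ℂ) (hq : ‖q‖ < 1) :
    ∑' n : ℕ, ∑' k : ℕ,
      (if k ≤ n then
        (-1 : ℂ) ^ n * q ^ (k * (k + 1) + n * (n + 1) / 2) * qp q n /
          (qp q k * qp q (n - k))
      else 0) =
    ∑' n : ℕ, q ^ (3 * n ^ 2 + 2 * n) * (1 - q ^ (2 * n + 1)) := by
  rw [tsum_congr (tsum_qbinom_eq_lhsTerm q), ← tsum_rhsTerm hq]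
  exact tsum_eq_tsum_of_sub_eq_sub_succ (summable_lhsTerm hq) (summable_rhsTerm hq)
    (tendsto_remainderTerm hq) (remainderTerm_zero q)
    (lhsTerm_sub_rhsTerm (pow_succ_ne_one_of_norm_lt_one hq))
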